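/- The function ψ(p) = (2p − sin 2p)/(8 sin²p) is strictly increasing on the interval (0, π); moreover ψ(p) → 0 as p → 0⁺ and ψ(p) → +∞ as p → π⁻. -/

import Mathlib

/-!
Writing `ψ = N / D` with `N p = 2p - sin 2p` and `D p = 8 sin² p`, one has `N' = 4 sin² p` and
`D' = 16 sin p cos p`, so `ψ'(p) = (sin p - p cos p) / (2 sin³ p)`. The numerator vanishes at `0`
and has derivative `p sin p > 0`, hence ψ is strictly increasing on `(0, π)`. Near `0`,
`N p ≤ (2p)³/6` while `sin p ≥ 2p/π`, so `0 ≤ ψ p ≤ π² p / 24`. Near `π`, `N → 2π` while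
`D → 0⁺`.
-/

open Real Filter

noncomputable def ψ (p : ℝ) : ℝ := (2 * p - Real.sin (2 * p)) / (8 * Real.sin p ^ 2)

open Set Topology

theorem Real.sin_sub_mul_cos_pos {x : ℝ} (hx₀ : 0 < x) (hxπ : x ≤ π) :
    0 < sin x - x * cos x := by
  have hderiv (y : ℝ) : HasDerivAt (fun y ↦ sin y - y * cos y) (y * sin y) y := by
    refine ((hasDerivAt_sin y).sub ((hasDerivAt_id y).mul (hasDerivAt_cos y))).congr_deriv ?_
    simp only [id_eq]
    ring
  have hmono : StrictMonoOn (fun y ↦ sin y - y * cos y) (Icc 0 π) := by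
    refine strictMonoOn_of_deriv_pos (convex_Icc 0 π) (by fun_prop) fun y hy ↦ ?_
    rw [interior_Icc] at hy
    rw [(hderiv y).deriv]
    exact mul_pos hy.1 (sin_pos_of_pos_of_lt_pi hy.1 hy.2)
  simpa using hmono (left_mem_Icc.2 pi_pos.le) ⟨hx₀.le, hxπ⟩ hx₀

theorem hasDerivAt_ψ {p : ℝ} (hp : sin p ≠ 0) :
    HasDerivAt ψ ((sin p - p * cos p) / (2 * sin p ^ 3)) p := by
  have hN : HasDerivAt (fun q ↦ 2 * q - sin (2 * q)) (2 - cos (2 * p) * 2) p := by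
    have h2p := (hasDerivAt_id' p).const_mul 2
    exact (h2p.sub h2p.sin).congr_deriv (by ring)
  have hD : HasDerivAt (fun q ↦ 8 * sin q ^ 2) (8 * (2 * sin p * cos p)) p := by
    refine (((hasDerivAt_sin p).pow 2).const_mul 8).congr_deriv ?_
    ring
  refine (hN.div hD (by positivity)).congr_deriv ?_
  rw [cos_two_mul, sin_two_mul]
  field_simp
  ring

theorem strictMonoOn_ψ : StrictMonoOn ψ (Ioo 0 π) := by
  have hsin {p : ℝ} (hp : p ∈ Ioo 0 π) : 0 < sin p := sin_pos_of_pos_of_lt_pi hp.1 hp.2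
  refine strictMonoOn_of_deriv_pos (convex_Ioo 0 π)
    (fun p hp ↦ (hasDerivAt_ψ (hsin hp).ne').continuousAt.continuousWithinAt) fun p hp ↦ ?_
  rw [interior_Ioo] at hp
  rw [(hasDerivAt_ψ (hsin hp).ne').deriv]
  have := hsin hp
  exact div_pos (sin_sub_mul_cos_pos hp.1 hp.2.le) (by positivity)

theorem ψ_nonneg {p : ℝ} (hp : 0 ≤ p) : 0 ≤ ψ p :=
  div_nonneg (by linarith [sin_le (by linarith : (0 : ℝ) ≤ 2 * p)]) (by positivity)

theorem ψ_le_mul {p : ℝ} (hp₀ : 0 < p) (hpπ : p ≤ π / 2) : ψ p ≤ π ^ 2 / 24 * p := by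
  have hN : 2 * p - sin (2 * p) ≤ (2 * p) ^ 3 / 6 := by
    linarith [sin_ge_sub_cube (by linarith : (0 : ℝ) ≤ 2 * p)]
  have hsin : 2 / π * p ≤ sin p := mul_le_sin hp₀.le hpπ
  have hD : 8 * (2 / π * p) ^ 2 ≤ 8 * sin p ^ 2 := by gcongr
  calc ψ p ≤ (2 * p) ^ 3 / 6 / (8 * (2 / π * p) ^ 2) := by
        unfold ψ; gcongr
    _ = π ^ 2 / 24 * p := by field_simp; ring

theorem tendsto_ψ_nhdsGT_zero : Tendsto ψ (𝓝[>] 0) (𝓝 0) := by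
  have hbound : Tendsto (fun p ↦ π ^ 2 / 24 * p) (𝓝[>] 0) (𝓝 0) :=
    ((continuous_const_mul _).tendsto' 0 0 (mul_zero _)).mono_left nhdsWithin_le_nhds
  refine squeeze_zero' ?_ ?_ hbound
  · filter_upwards [self_mem_nhdsWithin] with p hp using ψ_nonneg (le_of_lt hp)
  · filter_upwards [Ioo_mem_nhdsGT (half_pos pi_pos)] with p hp using ψ_le_mul hp.1 hp.2.le

theorem tendsto_ψ_nhdsLT_pi : Tendsto ψ (𝓝[<] π) atTop := by
  have hN : Tendsto (fun p ↦ 2 * p - sin (2 * p)) (𝓝[<] π) (𝓝 (2 * π)) :=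
    (Continuous.tendsto' (by fun_prop) π _ (by simp)).mono_left nhdsWithin_le_nhds
  have hD : Tendsto (fun p ↦ 8 * sin p ^ 2) (𝓝[<] π) (𝓝[>] 0) := by
    refine tendsto_nhdsWithin_of_tendsto_nhds_of_eventually_within _ ?_ ?_
    · exact (Continuous.tendsto' (by fun_prop) π _ (by simp)).mono_left nhdsWithin_le_nhds
    · filter_upwards [Ioo_mem_nhdsLT pi_pos] with p hp
      have := sin_pos_of_pos_of_lt_pi hp.1 hp.2
      exact mem_Ioi.2 (by positivity)
  exact hN.pos_mul_atTop (by positivity) hD.inv_tendsto_nhdsGT_zero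

theorem stmt14 :
    StrictMonoOn ψ (Set.Ioo 0 Real.pi) ∧
    Filter.Tendsto ψ (nhdsWithin 0 (Set.Ioi 0)) (nhds 0) ∧
    Filter.Tendsto ψ (nhdsWithin Real.pi (Set.Iio Real.pi)) Filter.atTop :=
  ⟨strictMonoOn_ψ, tendsto_ψ_nhdsGT_zero, tendsto_ψ_nhdsLT_pi⟩
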